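/- Let p > 2, q = p/(p−1), and μ ∈ (0,1). There exists δ > 0 such that the function Q = Q_{p,δ} is real Fréchet differentiable on ℂ² and for all ζ, η ∈ ℂ the following hold, where DQ(ζ,η)(u,v) denotes the derivative of Q at (ζ,η) applied to (u,v) ∈ ℂ²: (i) DQ(ζ,η)(ζ,0) = p|ζ|^p + 2δ·|ζ|²·max{|ζ|^{p−2}, |η|^{2−q}}; (ii) q|η|^q ≤ DQ(ζ,η)(0,η) ≤ (q + (2−q)δ)·|η|^q; (iii) μ·(q + (2−q)δ)·|η|^q ≤ DQ(ζ,η)(0,η). -/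

import Mathlib

/-- The Nazarov–Treil Bellman function `Q_{p,δ}`. -/
noncomputable def bellmanQ (p q δ : ℝ) (ζ η : ℂ) : ℝ :=
  ‖ζ‖ ^ p + ‖η‖ ^ q + δ *
    (if ‖ζ‖ ^ p ≤ ‖η‖ ^ q then ‖ζ‖ ^ 2 * ‖η‖ ^ (2 - q)
      else (2 / p) * ‖ζ‖ ^ p + (2 / q - 1) * ‖η‖ ^ q)

open Real Asymptotics Filter Topology

section aux

/-- Derivative of `‖·‖ ^ r` at a nonzero point, for arbitrary real `r`. -/
theorem hasFDerivAt_norm_rpow_ne {E : Type*} [NormedAddCommGroup E] [InnerProductSpace ℝ E]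
    {x : E} (hx : x ≠ 0) (r : ℝ) :
    HasFDerivAt (fun x : E ↦ ‖x‖ ^ r) ((r * ‖x‖ ^ (r - 2)) • innerSL ℝ x) x := by
  apply HasStrictFDerivAt.hasFDerivAt
  convert (hasStrictFDerivAt_norm_sq x).rpow_const (p := r / 2) (Or.inl (by simp [hx])) using 0
  simp_rw [← Real.rpow_natCast_mul (norm_nonneg _), ← Nat.cast_smul_eq_nsmul ℝ, smul_smul]
  ring_nf

theorem hasF_fst {r : ℝ} (hr : 1 < r) (w : ℂ × ℂ) :
    HasFDerivAt (fun w : ℂ × ℂ => ‖w.1‖ ^ r)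
      (((r * ‖w.1‖ ^ (r - 2)) • innerSL ℝ w.1).comp (ContinuousLinearMap.fst ℝ ℂ ℂ)) w :=
  (hasFDerivAt_norm_rpow w.1 hr).comp w hasFDerivAt_fst

theorem hasF_snd {r : ℝ} (hr : 1 < r) (w : ℂ × ℂ) :
    HasFDerivAt (fun w : ℂ × ℂ => ‖w.2‖ ^ r)
      (((r * ‖w.2‖ ^ (r - 2)) • innerSL ℝ w.2).comp (ContinuousLinearMap.snd ℝ ℂ ℂ)) w :=
  (hasFDerivAt_norm_rpow w.2 hr).comp w hasFDerivAt_snd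

theorem hasF_snd_ne (r : ℝ) {w : ℂ × ℂ} (hw : w.2 ≠ 0) :
    HasFDerivAt (fun w : ℂ × ℂ => ‖w.2‖ ^ r)
      (((r * ‖w.2‖ ^ (r - 2)) • innerSL ℝ w.2).comp (ContinuousLinearMap.snd ℝ ℂ ℂ)) w :=
  (hasFDerivAt_norm_rpow_ne hw r).comp w hasFDerivAt_snd

theorem hasF_sq_fst (w : ℂ × ℂ) :
    HasFDerivAt (fun w : ℂ × ℂ => ‖w.1‖ ^ (2 : ℕ))
      ((2 • innerSL ℝ w.1).comp (ContinuousLinearMap.fst ℝ ℂ ℂ)) w :=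
  (hasStrictFDerivAt_norm_sq w.1).hasFDerivAt.comp w hasFDerivAt_fst

/-- little-o of norm powers at the origin. -/
theorem littleo_norm_rpow {s : ℝ} (hs : 1 < s) :
    (fun w : ℂ × ℂ => ‖w‖ ^ s) =o[𝓝 (0 : ℂ × ℂ)] (fun w => w) := by
  rw [Asymptotics.isLittleO_iff]
  intro c hc
  have hcont : Continuous fun w : ℂ × ℂ => ‖w‖ ^ (s - 1) :=
    continuous_norm.rpow_const fun _ => Or.inr (by linarith)
  have h0 : Tendsto (fun w : ℂ × ℂ => ‖w‖ ^ (s - 1)) (𝓝 0) (𝓝 0) := by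
    have := hcont.tendsto (0 : ℂ × ℂ)
    simpa [Real.zero_rpow (by linarith : s - 1 ≠ 0)] using this
  filter_upwards [h0.eventually (eventually_le_nhds hc)] with w hw
  have h1 : ‖w‖ ^ s = ‖w‖ ^ (s - 1) * ‖w‖ := by
    have := Real.rpow_add' (norm_nonneg w) (ne_of_gt (by linarith : (0:ℝ) < s - 1 + 1))
    rw [sub_add_cancel, Real.rpow_one] at this
    exact this
  have h2 : ‖w‖ ^ (s - 1) * ‖w‖ ≤ c * ‖w‖ :=
    mul_le_mul_of_nonneg_right hw (norm_nonneg w)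
  calc ‖‖w‖ ^ s‖ = ‖w‖ ^ s := by
        rw [Real.norm_eq_abs, abs_of_nonneg (Real.rpow_nonneg (norm_nonneg w) s)]
    _ ≤ c * ‖w‖ := by rw [h1]; exact h2

end aux

set_option maxHeartbeats 1600000 in
/-- For `p > 2` and `μ ∈ (0,1)` there is `δ > 0` such that `Q = Q_{p,δ}` is real Fréchet
differentiable on `ℂ²` and its derivative satisfies
`DQ(ζ,η)(ζ,0) = p|ζ|^p + 2δ|ζ|² max{|ζ|^{p-2}, |η|^{2-q}}` and
`μ(q + (2-q)δ)|η|^q ≤ q|η|^q ≤ DQ(ζ,η)(0,η) ≤ (q + (2-q)δ)|η|^q`. -/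
theorem bellman_first_order_estimates
    (p q μ : ℝ) (hp : 2 < p) (hq : q = p / (p - 1)) (hμ0 : 0 < μ) (hμ1 : μ < 1) :
    ∃ δ : ℝ, 0 < δ ∧ ∀ ζ η : ℂ, ∃ L : ℂ × ℂ →L[ℝ] ℝ,
      HasFDerivAt (fun w : ℂ × ℂ => bellmanQ p q δ w.1 w.2) L (ζ, η) ∧
      L (ζ, 0) = p * ‖ζ‖ ^ p + 2 * δ * ‖ζ‖ ^ 2 * max (‖ζ‖ ^ (p - 2)) (‖η‖ ^ (2 - q)) ∧
      q * ‖η‖ ^ q ≤ L (0, η) ∧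
      L (0, η) ≤ (q + (2 - q) * δ) * ‖η‖ ^ q ∧
      μ * ((q + (2 - q) * δ) * ‖η‖ ^ q) ≤ L (0, η) := by
  -- basic facts about p and q
  have hp0 : (0:ℝ) < p := by linarith
  have hp1 : (1:ℝ) < p := by linarith
  have hpm1 : (0:ℝ) < p - 1 := by linarith
  have hq1 : 1 < q := by
    rw [hq, lt_div_iff₀ hpm1]; linarith
  have hq2 : q < 2 := by
    rw [hq, div_lt_iff₀ hpm1]; linarith
  have hq0 : (0:ℝ) < q := by linarith
  have h2q : (0:ℝ) < 2 - q := by linarith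
  -- choice of δ
  obtain ⟨δ, hδ, hμδ⟩ : ∃ δ : ℝ, 0 < δ ∧ μ * (q + (2 - q) * δ) ≤ q := by
    refine ⟨(1 - μ) * q / (2 - q), div_pos (mul_pos (by linarith) hq0) h2q, ?_⟩
    have h1 : (2 - q) * ((1 - μ) * q / (2 - q)) = (1 - μ) * q := by
      field_simp
    rw [h1]
    nlinarith [mul_nonneg hq0.le (sq_nonneg (1 - μ))]
  -- key exponent identities
  have keyr : q * ((p - 2) / p) = 2 - q := by
    rw [hq]; field_simp; ring
  have keyp : p * ((p - 2) / p) = p - 2 := by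
    rw [mul_comm, div_mul_cancel₀ _ (ne_of_gt hp0)]
  have key2 : q * (2 / p) = 2 * q - 2 := by
    rw [hq]; field_simp; ring
  have hr0 : (0:ℝ) ≤ (p - 2) / p := div_nonneg (by linarith) hp0.le
  -- representation of the two exponent comparisons via a common power
  have pow1 : ∀ a : ℝ, 0 ≤ a → a ^ (p - 2) = (a ^ p) ^ ((p - 2) / p) := by
    intro a ha
    rw [← Real.rpow_mul ha, keyp]
  have pow2 : ∀ b : ℝ, 0 ≤ b → b ^ (2 - q) = (b ^ q) ^ ((p - 2) / p) := by
    intro b hb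
    rw [← Real.rpow_mul hb, keyr]
  refine ⟨δ, hδ, fun ζ η => ?_⟩
  -- trivial consequence: third inequality follows from the first
  have third : ∀ v : ℝ, q * ‖η‖ ^ q ≤ v → μ * ((q + (2 - q) * δ) * ‖η‖ ^ q) ≤ v := by
    intro v hv
    have h1 : μ * ((q + (2 - q) * δ) * ‖η‖ ^ q) = (μ * (q + (2 - q) * δ)) * ‖η‖ ^ q := by ring
    have h2 : (μ * (q + (2 - q) * δ)) * ‖η‖ ^ q ≤ q * ‖η‖ ^ q :=
      mul_le_mul_of_nonneg_right hμδ (Real.rpow_nonneg (norm_nonneg η) q)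
    linarith
  -- comparison of the two max arguments
  have cmp : ∀ a b : ℝ, 0 ≤ a → 0 ≤ b → a ^ p ≤ b ^ q → a ^ (p - 2) ≤ b ^ (2 - q) := by
    intro a b ha hb hab
    rw [pow1 a ha, pow2 b hb]
    exact Real.rpow_le_rpow (Real.rpow_nonneg ha p) hab hr0
  have cmp' : ∀ a b : ℝ, 0 ≤ a → 0 ≤ b → b ^ q ≤ a ^ p → b ^ (2 - q) ≤ a ^ (p - 2) := by
    intro a b ha hb hab
    rw [pow1 a ha, pow2 b hb]
    exact Real.rpow_le_rpow (Real.rpow_nonneg hb q) hab hr0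
  -- the key product bound
  have bound : ∀ a b : ℝ, 0 ≤ a → 0 ≤ b → a ^ p ≤ b ^ q → a ^ (2:ℕ) * b ^ (2 - q) ≤ b ^ q := by
    intro a b ha hb hab
    have h1 : a ^ (2:ℕ) = (a ^ p) ^ (2 / p) := by
      rw [← Real.rpow_mul ha, show p * (2 / p) = 2 by field_simp,
        show (2:ℝ) = ((2:ℕ):ℝ) by norm_num, Real.rpow_natCast]
    have h2 : (a ^ p) ^ (2 / p) ≤ (b ^ q) ^ (2 / p) :=
      Real.rpow_le_rpow (Real.rpow_nonneg ha p) hab (by positivity)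
    have h3 : (b ^ q) ^ (2 / p) = b ^ (q * (2 / p)) := (Real.rpow_mul hb q (2 / p)).symm
    have h4 : b ^ (q * (2 / p)) * b ^ (2 - q) = b ^ q := by
      rw [← Real.rpow_add' hb (by rw [key2]; ring_nf; exact ne_of_gt hq0)]
      congr 1
      rw [key2]; ring
    calc a ^ (2:ℕ) * b ^ (2 - q) ≤ (b ^ q) ^ (2 / p) * b ^ (2 - q) := by
          rw [h1]; exact mul_le_mul_of_nonneg_right h2 (Real.rpow_nonneg hb _)
      _ = b ^ q := by rw [h3, h4]
  -- merging lemma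
  have merge : ∀ x : ℝ, 0 ≤ x → ∀ r : ℝ, r + 2 ≠ 0 → x ^ r * x ^ (2:ℕ) = x ^ (r + 2) := by
    intro x hx r hr
    rw [Real.rpow_add' hx hr,
      show (2:ℝ) = ((2:ℕ):ℝ) by norm_num, Real.rpow_natCast]
  have cont1 : Continuous fun w : ℂ × ℂ => ‖w.1‖ ^ p :=
    continuous_fst.norm.rpow_const fun _ => Or.inr hp0.le
  have cont2 : Continuous fun w : ℂ × ℂ => ‖w.2‖ ^ q :=
    continuous_snd.norm.rpow_const fun _ => Or.inr hq0.le
  rcases lt_trichotomy (‖ζ‖ ^ p) (‖η‖ ^ q) with hlt | heq | hgt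
  · -- case ‖ζ‖^p < ‖η‖^q : locally the first branch
    have hη0 : η ≠ 0 := by
      intro h
      rw [h] at hlt
      simp only [norm_zero, Real.zero_rpow (ne_of_gt hq0)] at hlt
      exact absurd hlt (not_lt.mpr (Real.rpow_nonneg (norm_nonneg ζ) p))
    have hev : (fun w : ℂ × ℂ => bellmanQ p q δ w.1 w.2) =ᶠ[𝓝 (ζ, η)]
        (fun w : ℂ × ℂ => ‖w.1‖ ^ p + ‖w.2‖ ^ q +
          δ * (‖w.1‖ ^ (2:ℕ) * ‖w.2‖ ^ (2 - q))) := by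
      filter_upwards [(isOpen_lt cont1 cont2).mem_nhds hlt] with w hw
      simp only [bellmanQ, if_pos hw.le]
    have hF1 := ((hasF_fst hp1 (ζ, η)).add (hasF_snd hq1 (ζ, η))).add
      (((hasF_sq_fst (ζ, η)).mul (hasF_snd_ne (2 - q) (hη0 : (ζ, η).2 ≠ 0))).const_mul δ)
    have hmζ : ‖ζ‖ ^ (p - 2) * ‖ζ‖ ^ (2:ℕ) = ‖ζ‖ ^ p := by
      have := merge ‖ζ‖ (norm_nonneg ζ) (p - 2) (by intro h; apply ne_of_gt hp0; linarith)
      rwa [show p - 2 + 2 = p by ring] at this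
    have hmη : ‖η‖ ^ (q - 2) * ‖η‖ ^ (2:ℕ) = ‖η‖ ^ q := by
      have := merge ‖η‖ (norm_nonneg η) (q - 2) (by intro h; apply ne_of_gt hq0; linarith)
      rwa [show q - 2 + 2 = q by ring] at this
    have hm2 : ‖η‖ ^ (2 - q - 2) * ‖η‖ ^ (2:ℕ) = ‖η‖ ^ (2 - q) := by
      have := merge ‖η‖ (norm_nonneg η) (2 - q - 2) (by intro h; apply ne_of_gt h2q; linarith)
      rwa [show 2 - q - 2 + 2 = 2 - q by ring] at this
    have hmax : max (‖ζ‖ ^ (p - 2)) (‖η‖ ^ (2 - q)) = ‖η‖ ^ (2 - q) :=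
      max_eq_right (cmp _ _ (norm_nonneg ζ) (norm_nonneg η) hlt.le)
    have hval : q * ‖η‖ ^ (q - 2) * ‖η‖ ^ (2:ℕ) +
        δ * (‖ζ‖ ^ (2:ℕ) * ((2 - q) * ‖η‖ ^ (2 - q - 2) * ‖η‖ ^ (2:ℕ))) =
        q * ‖η‖ ^ q + (2 - q) * δ * (‖ζ‖ ^ (2:ℕ) * ‖η‖ ^ (2 - q)) := by
      linear_combination q * hmη + δ * (2 - q) * (‖ζ‖ ^ (2:ℕ)) * hm2
    have hnn : (0:ℝ) ≤ ‖η‖ ^ q := Real.rpow_nonneg (norm_nonneg η) q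
    have hbdd : (2 - q) * δ * (‖ζ‖ ^ (2:ℕ) * ‖η‖ ^ (2 - q)) ≤ (2 - q) * δ * ‖η‖ ^ q :=
      mul_le_mul_of_nonneg_left
        (bound _ _ (norm_nonneg ζ) (norm_nonneg η) hlt.le)
        (mul_nonneg h2q.le hδ.le)
    have hnn2 : (0:ℝ) ≤ (2 - q) * δ * (‖ζ‖ ^ (2:ℕ) * ‖η‖ ^ (2 - q)) := by
      have : (0:ℝ) ≤ ‖ζ‖ ^ (2:ℕ) * ‖η‖ ^ (2 - q) :=
        mul_nonneg (by positivity) (Real.rpow_nonneg (norm_nonneg η) _)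
      exact mul_nonneg (mul_nonneg h2q.le hδ.le) this
    refine ⟨_, hF1.congr_of_eventuallyEq hev, ?_, ?_, ?_, ?_⟩
    all_goals simp only [ContinuousLinearMap.add_apply, ContinuousLinearMap.coe_comp',
      Function.comp_apply, ContinuousLinearMap.coe_fst', ContinuousLinearMap.coe_snd',
      ContinuousLinearMap.smul_apply, innerSL_apply_apply, smul_eq_mul, inner_zero_right,
      real_inner_self_eq_norm_sq, mul_zero, add_zero, zero_add, nsmul_eq_mul,
      Nat.cast_ofNat]
    · rw [hmax]
      linear_combination p * hmζ
    · rw [hval]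
      linarith
    · rw [hval]
      linarith
    · rw [hval]
      exact third _ (by linarith)
  · -- boundary case ‖ζ‖^p = ‖η‖^q
    by_cases hζ0 : ζ = 0
    · -- the origin
      have hη0 : η = 0 := by
        rw [hζ0] at heq
        simp only [norm_zero, Real.zero_rpow (ne_of_gt hp0)] at heq
        exact norm_eq_zero.mp
          ((Real.rpow_eq_zero (norm_nonneg η) (ne_of_gt hq0)).mp heq.symm)
      subst hζ0; subst hη0
      have h2q' : (0:ℝ) ≤ 2 / q - 1 := by
        rw [sub_nonneg, le_div_iff₀ hq0]; linarith
      have hp2' : (0:ℝ) ≤ 2 / p := by positivity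
      have hQnn : ∀ w : ℂ × ℂ, 0 ≤ bellmanQ p q δ w.1 w.2 := by
        intro w
        have n1 : (0:ℝ) ≤ ‖w.1‖ ^ p := Real.rpow_nonneg (norm_nonneg _) _
        have n2 : (0:ℝ) ≤ ‖w.2‖ ^ q := Real.rpow_nonneg (norm_nonneg _) _
        have n3 : (0:ℝ) ≤ ‖w.2‖ ^ (2 - q) := Real.rpow_nonneg (norm_nonneg _) _
        have n4 : (0:ℝ) ≤ ‖w.1‖ ^ (2:ℕ) := by positivity
        unfold bellmanQ
        split_ifs with hcond
        · have : 0 ≤ δ * (‖w.1‖ ^ (2:ℕ) * ‖w.2‖ ^ (2 - q)) :=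
            mul_nonneg hδ.le (mul_nonneg n4 n3)
          linarith
        · have : 0 ≤ δ * (2 / p * ‖w.1‖ ^ p + (2 / q - 1) * ‖w.2‖ ^ q) :=
            mul_nonneg hδ.le (add_nonneg (mul_nonneg hp2' n1) (mul_nonneg h2q' n2))
          linarith
      have hQle : ∀ w : ℂ × ℂ, bellmanQ p q δ w.1 w.2 ≤
          ‖w‖ ^ p + ‖w‖ ^ q + δ * ‖w‖ ^ (4 - q) + δ * (2 / p * ‖w‖ ^ p) +
            δ * ((2 / q - 1) * ‖w‖ ^ q) := by
        intro w
        have e1 : ‖w.1‖ ^ p ≤ ‖w‖ ^ p :=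
          Real.rpow_le_rpow (norm_nonneg _) (norm_fst_le w) hp0.le
        have e2 : ‖w.2‖ ^ q ≤ ‖w‖ ^ q :=
          Real.rpow_le_rpow (norm_nonneg _) (norm_snd_le w) hq0.le
        have e3 : ‖w.2‖ ^ (2 - q) ≤ ‖w‖ ^ (2 - q) :=
          Real.rpow_le_rpow (norm_nonneg _) (norm_snd_le w) h2q.le
        have e4 : ‖w.1‖ ^ (2:ℕ) ≤ ‖w‖ ^ (2:ℕ) :=
          pow_le_pow_left₀ (norm_nonneg _) (norm_fst_le w) 2
        have e5 : ‖w‖ ^ (2 - q) * ‖w‖ ^ (2:ℕ) = ‖w‖ ^ (4 - q) := by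
          have := merge ‖w‖ (norm_nonneg w) (2 - q) (by intro hcc; linarith)
          rwa [show 2 - q + 2 = 4 - q by ring] at this
        have n3 : (0:ℝ) ≤ ‖w.2‖ ^ (2 - q) := Real.rpow_nonneg (norm_nonneg _) _
        have n3' : (0:ℝ) ≤ ‖w‖ ^ (2 - q) := Real.rpow_nonneg (norm_nonneg _) _
        have n1 : (0:ℝ) ≤ ‖w‖ ^ p := Real.rpow_nonneg (norm_nonneg _) _
        have n2 : (0:ℝ) ≤ ‖w‖ ^ q := Real.rpow_nonneg (norm_nonneg _) _
        unfold bellmanQ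
        split_ifs with hcond
        · have b1 : ‖w.1‖ ^ (2:ℕ) * ‖w.2‖ ^ (2 - q) ≤ ‖w‖ ^ (4 - q) := by
            calc ‖w.1‖ ^ (2:ℕ) * ‖w.2‖ ^ (2 - q) ≤ ‖w‖ ^ (2:ℕ) * ‖w‖ ^ (2 - q) :=
                  mul_le_mul e4 e3 n3 (by positivity)
              _ = ‖w‖ ^ (4 - q) := by rw [mul_comm]; exact e5
          have b2 : δ * (‖w.1‖ ^ (2:ℕ) * ‖w.2‖ ^ (2 - q)) ≤ δ * ‖w‖ ^ (4 - q) :=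
            mul_le_mul_of_nonneg_left b1 hδ.le
          have b3 : 0 ≤ δ * (2 / p * ‖w‖ ^ p) := mul_nonneg hδ.le (mul_nonneg hp2' n1)
          have b4 : 0 ≤ δ * ((2 / q - 1) * ‖w‖ ^ q) := mul_nonneg hδ.le (mul_nonneg h2q' n2)
          linarith
        · have b1 : δ * (2 / p * ‖w.1‖ ^ p) ≤ δ * (2 / p * ‖w‖ ^ p) :=
            mul_le_mul_of_nonneg_left (mul_le_mul_of_nonneg_left e1 hp2') hδ.le
          have b2 : δ * ((2 / q - 1) * ‖w.2‖ ^ q) ≤ δ * ((2 / q - 1) * ‖w‖ ^ q) :=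
            mul_le_mul_of_nonneg_left (mul_le_mul_of_nonneg_left e2 h2q') hδ.le
          have b3 : 0 ≤ δ * ‖w‖ ^ (4 - q) :=
            mul_nonneg hδ.le (Real.rpow_nonneg (norm_nonneg _) _)
          nlinarith [mul_le_mul_of_nonneg_left e1 hδ.le]
      have hb0 : bellmanQ p q δ 0 0 = 0 := by
        simp [bellmanQ, Real.zero_rpow (ne_of_gt hp0), Real.zero_rpow (ne_of_gt hq0)]
      have ho : (fun w : ℂ × ℂ => ‖w‖ ^ p + ‖w‖ ^ q + δ * ‖w‖ ^ (4 - q) +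
          δ * (2 / p * ‖w‖ ^ p) + δ * ((2 / q - 1) * ‖w‖ ^ q))
          =o[𝓝 (0 : ℂ × ℂ)] (fun w => w) := by
        have o1 := littleo_norm_rpow hp1
        have o2 := littleo_norm_rpow hq1
        have o3 := littleo_norm_rpow (show (1:ℝ) < 4 - q by linarith)
        exact ((((o1.add o2).add (o3.const_mul_left δ)).add
          ((o1.const_mul_left (2 / p)).const_mul_left δ)).add
          ((o2.const_mul_left (2 / q - 1)).const_mul_left δ))
      have hO : (fun w : ℂ × ℂ => bellmanQ p q δ w.1 w.2) =O[𝓝 (0 : ℂ × ℂ)]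
          (fun w : ℂ × ℂ => ‖w‖ ^ p + ‖w‖ ^ q + δ * ‖w‖ ^ (4 - q) +
            δ * (2 / p * ‖w‖ ^ p) + δ * ((2 / q - 1) * ‖w‖ ^ q)) := by
        refine Asymptotics.isBigO_of_le _ fun w => ?_
        rw [Real.norm_eq_abs, Real.norm_eq_abs, abs_of_nonneg (hQnn w),
          abs_of_nonneg (le_trans (hQnn w) (hQle w))]
        exact hQle w
      have hQo := hO.trans_isLittleO ho
      have hF : HasFDerivAt (fun w : ℂ × ℂ => bellmanQ p q δ w.1 w.2)
          (0 : ℂ × ℂ →L[ℝ] ℝ) ((0 : ℂ), (0 : ℂ)) := by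
        apply hasFDerivAt_iff_isLittleO.mpr
        simpa [hb0, Prod.mk_zero_zero] using hQo
      refine ⟨0, hF, ?_, ?_, ?_, ?_⟩ <;>
        simp [Real.zero_rpow (ne_of_gt hp0), Real.zero_rpow (ne_of_gt hq0),
          Real.zero_rpow (ne_of_gt h2q),
          Real.zero_rpow (show p - 2 ≠ 0 by intro hcc; linarith)]
    · -- nonzero boundary point
      have hη0 : η ≠ 0 := by
        intro h
        rw [h] at heq
        simp only [norm_zero, Real.zero_rpow (ne_of_gt hq0)] at heq
        exact hζ0 (norm_eq_zero.mp ((Real.rpow_eq_zero (norm_nonneg ζ) (ne_of_gt hp0)).mp heq))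
      have hηpos : 0 < ‖η‖ := norm_pos_iff.mpr hη0
      have hp2 : 2 / p * p = 2 := div_mul_cancel₀ 2 (ne_of_gt hp0)
      have hq2v : (2 / q - 1) * q = 2 - q := by
        rw [sub_mul, div_mul_cancel₀ _ (ne_of_gt hq0), one_mul]
      have key3 : 2 / p + (2 / q - 1) = 1 := by
        rw [hq]; field_simp; ring
      have hc1 : ‖η‖ ^ (2 - q) = ‖ζ‖ ^ (p - 2) := by
        rw [pow1 _ (norm_nonneg ζ), pow2 _ (norm_nonneg η), heq]
      have e1 : ‖ζ‖ ^ (2:ℕ) = (‖η‖ ^ q) ^ (2 / p) := by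
        rw [← heq, ← Real.rpow_mul (norm_nonneg ζ), show p * (2 / p) = 2 by field_simp,
          show (2:ℝ) = ((2:ℕ):ℝ) by norm_num, Real.rpow_natCast]
      have hc2 : ‖ζ‖ ^ (2:ℕ) * ‖η‖ ^ (2 - q - 2) = ‖η‖ ^ (q - 2) := by
        rw [e1, ← Real.rpow_mul (norm_nonneg η), ← Real.rpow_add hηpos, key2]
        ring_nf
      have hgA : ‖ζ‖ ^ (2:ℕ) * ‖η‖ ^ (2 - q) = ‖η‖ ^ q := by
        rw [e1, ← Real.rpow_mul (norm_nonneg η), ← Real.rpow_add hηpos, key2]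
        ring_nf
      -- the correction term and its derivative
      have hg := ((hasF_sq_fst (ζ, η)).mul (hasF_snd_ne (2 - q) (hη0 : (ζ, η).2 ≠ 0))).sub
        ((((hasF_fst hp1 (ζ, η)).const_mul (2 / p)).add
          ((hasF_snd hq1 (ζ, η)).const_mul (2 / q - 1))))
      set g : ℂ × ℂ → ℝ := fun w =>
        ‖w.1‖ ^ (2:ℕ) * ‖w.2‖ ^ (2 - q) -
          (2 / p * ‖w.1‖ ^ p + (2 / q - 1) * ‖w.2‖ ^ q) with hgdef
      have hgval : g (ζ, η) = 0 := by
        simp only [hgdef]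
        linear_combination hgA - (2 / p) * heq - (‖η‖ ^ q) * key3
      have hDg0 : HasFDerivAt g (0 : ℂ × ℂ →L[ℝ] ℝ) (ζ, η) := by
        refine HasFDerivAt.congr_fderiv hg ?_
        symm
        apply ContinuousLinearMap.ext
        intro u
        simp only [ContinuousLinearMap.add_apply, ContinuousLinearMap.sub_apply,
          ContinuousLinearMap.coe_comp', Function.comp_apply, ContinuousLinearMap.coe_fst',
          ContinuousLinearMap.coe_snd', ContinuousLinearMap.smul_apply, innerSL_apply_apply,
          smul_eq_mul, nsmul_eq_mul, Nat.cast_ofNat, ContinuousLinearMap.zero_apply]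
        linear_combination (-(2 * (inner ℝ ζ u.1 : ℝ))) * hc1 - ((2 - q) * (inner ℝ η u.2 : ℝ)) * hc2
          + ((inner ℝ ζ u.1 : ℝ) * ‖ζ‖ ^ (p - 2)) * hp2
          + ((inner ℝ η u.2 : ℝ) * ‖η‖ ^ (q - 2)) * hq2v
      -- the truncated correction term
      set G : ℂ × ℂ → ℝ := fun w =>
        if ‖w.1‖ ^ p ≤ ‖w.2‖ ^ q then g w else 0 with hGdef
      have hGval : G (ζ, η) = 0 := by
        simp only [hGdef, if_pos (le_of_eq heq), hgval]
      have hglo : (fun w => g w) =o[𝓝 (ζ, η)] (fun w => w - (ζ, η)) := by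
        have h1 := hasFDerivAt_iff_isLittleO.mp hDg0
        simpa [hgval] using h1
      have hGlo : (fun w => G w) =o[𝓝 (ζ, η)] (fun w => w - (ζ, η)) := by
        refine (Asymptotics.isBigO_of_le _ fun w => ?_).trans_isLittleO hglo
        simp only [hGdef]
        split_ifs with h
        · exact le_refl _
        · simp [norm_nonneg]
      have hG : HasFDerivAt G (0 : ℂ × ℂ →L[ℝ] ℝ) (ζ, η) :=
        hasFDerivAt_iff_isLittleO.mpr (by simpa [hGval] using hGlo)
      -- the main part
      have hF2 := (((hasF_fst hp1 (ζ, η)).add (hasF_snd hq1 (ζ, η))).add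
        ((((hasF_fst hp1 (ζ, η)).const_mul (2 / p)).add
          ((hasF_snd hq1 (ζ, η)).const_mul (2 / q - 1))).const_mul δ))
      have hsum := hF2.add (hG.const_mul δ)
      have hfun : (fun w : ℂ × ℂ => bellmanQ p q δ w.1 w.2) =
          fun w : ℂ × ℂ => (‖w.1‖ ^ p + ‖w.2‖ ^ q +
            δ * (2 / p * ‖w.1‖ ^ p + (2 / q - 1) * ‖w.2‖ ^ q)) + δ * G w := by
        funext w
        simp only [bellmanQ, hGdef, hgdef]
        split_ifs with h
        · ring
        · ring
      rw [smul_zero, add_zero] at hsum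
      replace hsum := hsum.congr_of_eventuallyEq (Filter.EventuallyEq.of_eq hfun)
      -- values
      have hmζ : ‖ζ‖ ^ (p - 2) * ‖ζ‖ ^ (2:ℕ) = ‖ζ‖ ^ p := by
        have := merge ‖ζ‖ (norm_nonneg ζ) (p - 2) (by intro h; apply ne_of_gt hp0; linarith)
        rwa [show p - 2 + 2 = p by ring] at this
      have hmη : ‖η‖ ^ (q - 2) * ‖η‖ ^ (2:ℕ) = ‖η‖ ^ q := by
        have := merge ‖η‖ (norm_nonneg η) (q - 2) (by intro h; apply ne_of_gt hq0; linarith)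
        rwa [show q - 2 + 2 = q by ring] at this
      have hmax : max (‖ζ‖ ^ (p - 2)) (‖η‖ ^ (2 - q)) = ‖ζ‖ ^ (p - 2) :=
        max_eq_left (le_of_eq hc1)
      have hval : q * ‖η‖ ^ (q - 2) * ‖η‖ ^ (2:ℕ) +
          δ * ((2 / q - 1) * (q * ‖η‖ ^ (q - 2) * ‖η‖ ^ (2:ℕ))) =
          (q + (2 - q) * δ) * ‖η‖ ^ q := by
        linear_combination (q + (2 - q) * δ) * hmη + (δ * (‖η‖ ^ (q - 2) * ‖η‖ ^ (2:ℕ))) * hq2v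
      have hnn : (0:ℝ) ≤ ‖η‖ ^ q := Real.rpow_nonneg (norm_nonneg η) q
      refine ⟨_, hsum, ?_, ?_, ?_, ?_⟩
      all_goals simp only [ContinuousLinearMap.add_apply, ContinuousLinearMap.coe_comp',
        Function.comp_apply, ContinuousLinearMap.coe_fst', ContinuousLinearMap.coe_snd',
        ContinuousLinearMap.smul_apply, innerSL_apply_apply, smul_eq_mul, inner_zero_right,
        real_inner_self_eq_norm_sq, mul_zero, add_zero, zero_add]
      · rw [hmax]
        linear_combination p * hmζ + (δ * (‖ζ‖ ^ (p - 2) * ‖ζ‖ ^ (2:ℕ))) * hp2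
      · rw [hval]
        nlinarith [mul_nonneg (mul_nonneg h2q.le hδ.le) hnn]
      · rw [hval]
      · rw [hval]
        exact third _ (by nlinarith [mul_nonneg (mul_nonneg h2q.le hδ.le) hnn])
  · -- case ‖η‖^q < ‖ζ‖^p : locally the second branch
    have hev : (fun w : ℂ × ℂ => bellmanQ p q δ w.1 w.2) =ᶠ[𝓝 (ζ, η)]
        (fun w : ℂ × ℂ => ‖w.1‖ ^ p + ‖w.2‖ ^ q +
          δ * ((2 / p) * ‖w.1‖ ^ p + (2 / q - 1) * ‖w.2‖ ^ q)) := by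
      filter_upwards [(isOpen_lt cont2 cont1).mem_nhds hgt] with w hw
      simp only [bellmanQ, if_neg (not_le.mpr hw)]
    have hF2 := (((hasF_fst hp1 (ζ, η)).add (hasF_snd hq1 (ζ, η))).add
      ((((hasF_fst hp1 (ζ, η)).const_mul (2 / p)).add
        ((hasF_snd hq1 (ζ, η)).const_mul (2 / q - 1))).const_mul δ))
    have hζ0 : ζ ≠ 0 := by
      intro h
      rw [h] at hgt
      simp only [norm_zero, Real.zero_rpow (ne_of_gt hp0)] at hgt
      exact absurd hgt (not_lt.mpr (Real.rpow_nonneg (norm_nonneg η) q))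
    have hmζ : ‖ζ‖ ^ (p - 2) * ‖ζ‖ ^ (2:ℕ) = ‖ζ‖ ^ p := by
      have := merge ‖ζ‖ (norm_nonneg ζ) (p - 2) (by intro h; apply ne_of_gt hp0; linarith)
      rwa [show p - 2 + 2 = p by ring] at this
    have hmη : ‖η‖ ^ (q - 2) * ‖η‖ ^ (2:ℕ) = ‖η‖ ^ q := by
      have := merge ‖η‖ (norm_nonneg η) (q - 2) (by intro h; apply ne_of_gt hq0; linarith)
      rwa [show q - 2 + 2 = q by ring] at this
    have hmax : max (‖ζ‖ ^ (p - 2)) (‖η‖ ^ (2 - q)) = ‖ζ‖ ^ (p - 2) :=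
      max_eq_left (cmp' _ _ (norm_nonneg ζ) (norm_nonneg η) hgt.le)
    have hval : q * ‖η‖ ^ (q - 2) * ‖η‖ ^ (2:ℕ) +
        δ * ((2 / q - 1) * (q * ‖η‖ ^ (q - 2) * ‖η‖ ^ (2:ℕ))) = (q + (2 - q) * δ) * ‖η‖ ^ q := by
      have hq2v : (2 / q - 1) * q = 2 - q := by
        rw [sub_mul, div_mul_cancel₀ _ (ne_of_gt hq0), one_mul]
      linear_combination (q + (2 - q) * δ) * hmη + (δ * (‖η‖ ^ (q - 2) * ‖η‖ ^ (2:ℕ))) * hq2v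
    have hnn : (0:ℝ) ≤ ‖η‖ ^ q := Real.rpow_nonneg (norm_nonneg η) q
    refine ⟨_, hF2.congr_of_eventuallyEq hev, ?_, ?_, ?_, ?_⟩
    all_goals simp only [ContinuousLinearMap.add_apply, ContinuousLinearMap.coe_comp',
      Function.comp_apply, ContinuousLinearMap.coe_fst', ContinuousLinearMap.coe_snd',
      ContinuousLinearMap.smul_apply, innerSL_apply_apply, smul_eq_mul, inner_zero_right,
      real_inner_self_eq_norm_sq, mul_zero, add_zero, zero_add]
    · rw [hmax]
      have hp2 : 2 / p * p = 2 := div_mul_cancel₀ 2 (ne_of_gt hp0)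
      linear_combination p * hmζ + (δ * (‖ζ‖ ^ (p - 2) * ‖ζ‖ ^ (2:ℕ))) * hp2
    · rw [hval]
      nlinarith [mul_nonneg (mul_nonneg h2q.le hδ.le) hnn]
    · rw [hval]
    · rw [hval]
      exact third _ (by nlinarith [mul_nonneg (mul_nonneg h2q.le hδ.le) hnn])
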